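/- arXiv:0904.3719 — 3 statements merged into one kernel-verified Lean document; each statement's English description precedes it below -/
import Mathlib

section
/- (Exclusion Lemma, two-module case) Let p be a prime, G cyclic of order p^n with generator σ, W an F_p[G]-module, and U, V submodules of W. Then U ∩ V = 0 if and only if U^G ∩ V^G = 0. -/
/-!
Since `σ` generates `G`, an element is `G`-fixed exactly when `σ - 1` kills it. In characteristic
`p` we have `(σ - 1) ^ p ^ n = σ ^ p ^ n - 1 = 0`, so for nonzero `x ∈ U ⊓ V` the last nonzero
term of `x, (σ - 1) • x, (σ - 1) ^ 2 • x, …` is a nonzero `G`-fixed element of `U ⊓ V`.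
-/

theorem Submodule.eq_bot_of_isNilpotent_of_smul_eq_zero {R M : Type*} [Semiring R]
    [AddCommMonoid M] [Module R M] {N : Submodule R M} {t : R} (ht : IsNilpotent t)
    (h : ∀ x ∈ N, t • x = 0 → x = 0) : N = ⊥ := by
  obtain ⟨k, hk⟩ := ht
  suffices ∀ k, ∀ x ∈ N, t ^ k • x = 0 → x = 0 from
    (N.eq_bot_iff).2 fun x hx => this k x hx (by rw [hk, zero_smul])
  intro k
  induction k with
  | zero => simp
  | succ k ih =>
    intro x hx hkx
    rw [pow_succ, mul_smul] at hkx
    exact h x hx (ih _ (N.smul_mem t hx) hkx)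

theorem isNilpotent_sub_one_of_pow_char_pow_eq_one {R : Type*} [Ring R] {p : ℕ} [Fact p.Prime]
    [CharP R p] {u : R} {n : ℕ} (hu : u ^ p ^ n = 1) : IsNilpotent (u - 1) :=
  ⟨p ^ n, by rw [sub_pow_char_pow_of_commute p n (Commute.one_right u), hu, one_pow, sub_self]⟩

theorem MonoidAlgebra.of_smul_eq_self_of_mem_powers {k G W : Type*} [Semiring k] [Monoid G]
    [AddCommMonoid W] [Module (MonoidAlgebra k G) W] {σ g : G} (hg : g ∈ Submonoid.powers σ)
    {x : W} (hx : MonoidAlgebra.of k G σ • x = x) : MonoidAlgebra.of k G g • x = x :=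
  Submonoid.powers_le
    (P := (MulAction.stabilizerSubmonoid (MonoidAlgebra k G) x).comap (MonoidAlgebra.of k G)).2
    hx hg

/-- (Exclusion Lemma, two-module case) For submodules `U, V` of an `𝔽_p[G]`-module `W`
(`G` cyclic of order `p^n` generated by `σ`), `U ∩ V = 0` if and only if the fixed
subspaces satisfy `U^G ∩ V^G = 0`. -/
theorem stmt_6 (p n : ℕ) (hp : p.Prime)
    (G : Type*) [CommGroup G] [Fintype G] (hG : Fintype.card G = p ^ n)
    (σ : G) (hσ : ∀ g : G, g ∈ Subgroup.zpowers σ)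
    (W : Type*) [AddCommGroup W] [Module (MonoidAlgebra (ZMod p) G) W]
    (U V : Submodule (MonoidAlgebra (ZMod p) G) W) :
    U ⊓ V = ⊥ ↔
      ∀ x : W, x ∈ U → x ∈ V →
        (∀ g : G, MonoidAlgebra.of (ZMod p) G g • x = x) → x = 0 := by
  refine ⟨fun hbot x hU hV _ => ((U ⊓ V).eq_bot_iff.1 hbot) x ⟨hU, hV⟩, fun h => ?_⟩
  have : Fact p.Prime := ⟨hp⟩
  have : CharP (MonoidAlgebra (ZMod p) G) p :=
    charP_of_injective_algebraMap (algebraMap (ZMod p) _).injective p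
  have hnil : IsNilpotent (MonoidAlgebra.of (ZMod p) G σ - 1) :=
    isNilpotent_sub_one_of_pow_char_pow_eq_one (by rw [← map_pow, ← hG, pow_card_eq_one, map_one])
  refine Submodule.eq_bot_of_isNilpotent_of_smul_eq_zero hnil ?_
  rintro x ⟨hU, hV⟩ hx
  rw [sub_smul, one_smul, sub_eq_zero] at hx
  exact h x hU hV fun g =>
    MonoidAlgebra.of_smul_eq_self_of_mem_powers (mem_powers_iff_mem_zpowers.2 (hσ g)) hx
end

section
/- (Exclusion Lemma, finite case) Let p be a prime, G cyclic of order p^n, W an F_p[G]-module, and U_1, ..., U_m submodules of W. The submodules U_1, ..., U_m form an internal direct sum (i.e., are independent as F_p[G]-submodules) if and only if the F_p-subspaces U_1^G, ..., U_m^G are independent (form an internal direct sum) inside W^G. -/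
/-! In characteristic `p` the element `t = σ - 1` of `𝔽_p[G]` satisfies
`t ^ p ^ n = σ ^ p ^ n - 1 = 0`, and its kernel on a module is the fixed subspace, since `σ`
generates `G`. Given a relation `∑ xᵢ = 0` with `xᵢ ∈ Uᵢ` not all zero, apply the largest power
`t ^ k` that does not kill the whole family `x`: the result is a nontrivial relation among fixed
vectors `t ^ k • xᵢ ∈ Uᵢ^G`. -/

open MonoidAlgebra

instance MonoidAlgebra.charP {k G : Type*} [CommRing k] [Monoid G] (p : ℕ) [CharP k p] :
    CharP (MonoidAlgebra k G) p :=
  charP_of_injective_algebraMap' k p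

theorem sub_one_pow_expChar_pow_eq_zero {R : Type*} [Ring R] {p : ℕ} [ExpChar R p]
    {n : ℕ} {a : R} (ha : a ^ p ^ n = 1) : (a - 1) ^ p ^ n = 0 := by
  rw [sub_pow_expChar_pow_of_commute _ _ (Commute.one_right a), ha, one_pow, sub_self]

theorem exists_pow_smul_ne_zero_and_smul_pow_smul_eq_zero {R M : Type*} [Semiring R]
    [AddCommMonoid M] [Module R M] {t : R} (ht : IsNilpotent t) {v : M} (hv : v ≠ 0) :
    ∃ k : ℕ, t ^ k • v ≠ 0 ∧ t • t ^ k • v = 0 := by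
  classical
  have hex : ∃ N, t ^ N • v = 0 := ht.imp fun N hN => by rw [hN, zero_smul]
  obtain ⟨k, hk⟩ : ∃ k, Nat.find hex = k + 1 :=
    Nat.exists_eq_succ_of_ne_zero fun h0 => hv (by simpa [h0] using Nat.find_spec hex)
  refine ⟨k, Nat.find_min hex (by omega), ?_⟩
  rw [smul_smul, ← pow_succ', ← hk]
  exact Nat.find_spec hex

theorem MonoidAlgebra.of_pow_smul_eq_self {k G M : Type*} [CommSemiring k] [Monoid G]
    [AddCommMonoid M] [Module (MonoidAlgebra k G) M] {g : G} {y : M}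
    (hy : of k G g • y = y) (l : ℕ) : of k G (g ^ l) • y = y := by
  induction l with
  | zero => rw [pow_zero, map_one, one_smul]
  | succ l ih => rw [pow_succ, map_mul, mul_smul, hy, ih]

theorem MonoidAlgebra.of_sub_one_smul_eq_zero_iff {k G M : Type*} [CommRing k] [Monoid G]
    [AddCommGroup M] [Module (MonoidAlgebra k G) M] {g : G} {y : M} :
    (of k G g - 1) • y = 0 ↔ of k G g • y = y := by
  rw [sub_smul, one_smul, sub_eq_zero]

/-- (Exclusion Lemma, finite case) Submodules `U_1, …, U_m` of an `𝔽_p[G]`-module `W`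
(`G` cyclic of order `p^n`, generated by `σ`) form an internal direct sum if and only if
their fixed subspaces `U_1^G, …, U_m^G` are independent as `𝔽_p`-subspaces of `W^G`. -/
theorem stmt_7 (p n m : ℕ) (hp : p.Prime)
    (G : Type*) [CommGroup G] [Fintype G] (hG : Fintype.card G = p ^ n)
    (σ : G) (hσ : ∀ g : G, g ∈ Subgroup.zpowers σ)
    (W : Type*) [AddCommGroup W] [Module (MonoidAlgebra (ZMod p) G) W]
    (U : Fin m → Submodule (MonoidAlgebra (ZMod p) G) W) :
    (∀ x : Fin m → W, (∀ i, x i ∈ U i) → ∑ i, x i = 0 → ∀ i, x i = 0) ↔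
    (∀ x : Fin m → W,
        (∀ i, x i ∈ U i ∧ ∀ g : G, MonoidAlgebra.of (ZMod p) G g • x i = x i) →
        ∑ i, x i = 0 → ∀ i, x i = 0) := by
  have : Fact p.Prime := ⟨hp⟩
  have ht : IsNilpotent (of (ZMod p) G σ - 1) := ⟨p ^ n, sub_one_pow_expChar_pow_eq_zero <| by
    rw [← map_pow, ← hG, pow_card_eq_one, map_one]⟩
  refine ⟨fun h x hx => h x fun i => (hx i).1, fun h x hx hsum => ?_⟩
  by_contra hx0
  obtain ⟨k, hk, hker⟩ :=
    exists_pow_smul_ne_zero_and_smul_pow_smul_eq_zero ht (v := x) fun h0 => hx0 (congrFun h0)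
  refine hk (funext <| h _ (fun i => ⟨(U i).smul_mem _ (hx i), fun g => ?_⟩) ?_)
  · obtain ⟨l, rfl⟩ := mem_powers_iff_mem_zpowers.mpr (hσ g)
    exact of_pow_smul_eq_self (of_sub_one_smul_eq_zero_iff.mp (congrFun hker i)) l
  · simp only [Pi.smul_apply, ← Finset.smul_sum, hsum, smul_zero]
end

section
/- Let p be a prime, G cyclic of order p^n with generator σ, and W an F_p[G]-module. Suppose for each 1 ≤ k ≤ p^n one chooses an F_p-subspace complement basis I_k of V_{k+1} inside V_k (with V_{p^n + 1} := 0), and for each x ∈ I_k an element α_x ∈ W with (σ-1)^{k-1} α_x = x. Then W is the internal direct sum over all k and x ∈ I_k of the cyclic F_p[G]-submodules generated by the α_x. -/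
/-- `V_i = im((σ-1)^{i-1}) ∩ W^G` for an `𝔽_p[G]`-module `W`. -/
def Vset (p : ℕ) {G : Type*} [CommGroup G] (σ : G) (W : Type*)
    [AddCommGroup W] [Module (MonoidAlgebra (ZMod p) G) W] (i : ℕ) : Set W :=
  {x | (∃ y : W, (MonoidAlgebra.of (ZMod p) G σ - 1) ^ (i - 1) • y = x) ∧
    ∀ g : G, MonoidAlgebra.of (ZMod p) G g • x = x}

/-! Put `τ = σ - 1`. Then `𝔽_p[G] = 𝔽_p[τ]`, `τ ^ p ^ n = 0` (Frobenius), and `W^G = ker τ`, so the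
cyclic module generated by `α_x` is spanned by the chain `α_x, τ α_x, …, τ ^ (k - 1) α_x = x`.

The chains are jointly independent: applying a suitable power of `τ` to a relation leaves a relation
among the tops `x`, whose coefficients therefore vanish; then descend in depth.

The cyclic modules span `W`: if `τ ^ (m + 1) w = 0` then `τ ^ m w ∈ V_{m+1}` is a combination of
those `x` with `k > m`, i.e. `τ ^ m` applied to a combination `u` of the `τ ^ (k - 1 - m) α_x`;
now `τ ^ m (w - u) = 0` and induction on `m` applies. -/

open Finset Submodule

theorem sub_one_pow_char_pow_eq_zero {R : Type*} [Ring R] (p n : ℕ) [Fact p.Prime] [CharP R p]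
    {a : R} (ha : a ^ p ^ n = 1) : (a - 1) ^ p ^ n = 0 := by
  rw [sub_pow_char_pow_of_commute _ _ (Commute.one_right a), ha, one_pow, sub_self]

namespace MonoidAlgebra

variable {k G : Type*}

theorem of_sub_one_pow_eq_zero_of_card_eq [Field k] (p n : ℕ) [Fact p.Prime] [CharP k p]
    [Group G] [Fintype G] (hG : Fintype.card G = p ^ n) (g : G) :
    (of k G g - 1) ^ p ^ n = 0 := by
  have : CharP (MonoidAlgebra k G) p :=
    charP_of_injective_algebraMap (algebraMap k (MonoidAlgebra k G)).injective p
  refine sub_one_pow_char_pow_eq_zero p n ?_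
  rw [← (of k G).map_pow, ← hG, pow_card_eq_one, (of k G).map_one]

theorem adjoin_of_sub_one_eq_top [CommRing k] [Group G] [Finite G] {σ : G}
    (hσ : ∀ g : G, g ∈ Subgroup.zpowers σ) :
    Algebra.adjoin k {of k G σ - 1} = ⊤ := by
  set A := Algebra.adjoin k {of k G σ - 1}
  have hof : of k G σ ∈ A := by
    have h := add_mem (Algebra.subset_adjoin (Set.mem_singleton _) : of k G σ - 1 ∈ A)
      (one_mem A)
    rwa [sub_add_cancel] at h
  refine Algebra.eq_top_iff.2 fun r => ?_
  induction r using MonoidAlgebra.induction_on with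
  | of g =>
    obtain ⟨m, rfl⟩ := mem_powers_iff_mem_zpowers.2 (hσ g)
    have h := pow_mem hof m
    rwa [← (of k G).map_pow] at h
  | add f g hf hg => exact add_mem hf hg
  | smul r f hf => exact Subalgebra.smul_mem _ hf r

theorem forall_of_smul_eq_self_iff [Ring k] [Group G] [Finite G] {σ : G}
    (hσ : ∀ g : G, g ∈ Subgroup.zpowers σ)
    {W : Type*} [AddCommGroup W] [Module (MonoidAlgebra k G) W] (w : W) :
    (∀ g : G, of k G g • w = w) ↔ (of k G σ - 1) • w = 0 := by
  rw [sub_smul, one_smul, sub_eq_zero]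
  refine ⟨fun h => h σ, fun h g => ?_⟩
  obtain ⟨m, rfl⟩ := mem_powers_iff_mem_zpowers.2 (hσ g)
  beta_reduce
  induction m with
  | zero => rw [pow_zero, (of k G).map_one, one_smul]
  | succ m ih => rw [pow_succ, (of k G).map_mul, mul_smul, h, ih]

end MonoidAlgebra

section CyclicDecomposition

variable {K R M ι : Type*} [Field K] [CommRing R] [Algebra K R]
  [AddCommGroup M] [Module R M] [Module K M] [IsScalarTower K R M] {τ : R}

theorem exists_eq_sum_range_pow_smul_of_mem_span_singleton (hτ : Algebra.adjoin K {τ} = ⊤)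
    {a v : M} {k : ℕ} (ha : τ ^ k • a = 0) (hv : v ∈ R ∙ a) :
    ∃ c : ℕ → K, v = ∑ j ∈ range k, c j • τ ^ j • a := by
  obtain ⟨r, rfl⟩ := mem_span_singleton.1 hv
  obtain ⟨f, rfl⟩ : r ∈ (Polynomial.aeval (R := K) τ).range := by
    rw [← Algebra.adjoin_singleton_eq_range_aeval, hτ]; trivial
  refine ⟨f.coeff, ?_⟩
  have hdeg : f.natDegree < k + (f.natDegree + 1) := by omega
  have htail : ∀ j, f.coeff (k + j) • τ ^ (k + j) • a = 0 := fun j => by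
    rw [pow_add, mul_comm, mul_smul, ha, smul_zero, smul_zero]
  rw [AlgHom.toRingHom_eq_coe, RingHom.coe_coe, Polynomial.aeval_eq_sum_range' hdeg,
    sum_range_add, add_smul, sum_smul, sum_smul]
  simp only [smul_assoc, htail, sum_const_zero, add_zero]

theorem pow_smul_sum_range_pow_smul {a : M} {k t : ℕ} (ha : τ ^ k • a = 0) {c : ℕ → K}
    (hc : ∀ j < k, c j ≠ 0 → k ≤ j + t + 1) :
    τ ^ t • ∑ j ∈ range k, c j • τ ^ j • a =
      (if t < k then c (k - 1 - t) else 0) • τ ^ (k - 1) • a := by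
  have hvanish : ∀ j, k ≤ j + t → τ ^ (j + t) • a = 0 := fun j hj => by
    rw [← Nat.sub_add_cancel hj, pow_add, mul_smul, ha, smul_zero]
  rw [smul_sum]
  simp only [smul_algebra_smul_comm _ (τ ^ t), smul_smul, ← pow_add]
  split_ifs with ht
  · rw [sum_eq_single (k - 1 - t)]
    · rw [Nat.sub_add_cancel (by omega : t ≤ k - 1)]
    · intro j hj hne
      rcases lt_or_gt_of_ne hne with hlt | hgt
      · by_cases hcj : c j = 0
        · rw [hcj, zero_smul]
        · have := hc j (mem_range.1 hj) hcj
          omega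
      · rw [hvanish j (by omega), smul_zero]
    · intro h
      exact absurd (mem_range.2 (by omega)) h
  · rw [zero_smul]
    exact sum_eq_zero fun j _ => by rw [hvanish j (by omega), smul_zero]

/- Induction on a bound `t` for the depths `k i - 1 - j` of the nonzero coefficients: `τ ^ (t - 1)`
kills every term except those of depth `t - 1`, which it sends to multiples of the independent
`x i`. -/
theorem eq_zero_of_sum_sum_pow_smul_eq_zero_of_le {x α : ι → M} {k : ι → ℕ}
    (hα : ∀ i, τ ^ (k i - 1) • α i = x i) (hkill : ∀ i, τ ^ k i • α i = 0)
    (hx : LinearIndependent K x) {s : Finset ι} {c : ι → ℕ → K}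
    (hsum : ∑ i ∈ s, ∑ j ∈ range (k i), c i j • τ ^ j • α i = 0) (t : ℕ)
    (ht : ∀ i ∈ s, ∀ j < k i, c i j ≠ 0 → k i ≤ j + t) :
    ∀ i ∈ s, ∀ j < k i, c i j = 0 := by
  induction t with
  | zero =>
    intro i hi j hj
    by_contra hne
    have := ht i hi j hj hne
    omega
  | succ t ih =>
    have htop : ∑ i ∈ s, (if t < k i then c i (k i - 1 - t) else 0) • x i = 0 := by
      have hτsum := congrArg (τ ^ t • ·) hsum
      rw [smul_zero, smul_sum] at hτsum
      rw [← hτsum]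
      refine sum_congr rfl fun i hi => ?_
      rw [pow_smul_sum_range_pow_smul (hkill i) (ht i hi), hα]
    have hcoeff := linearIndependent_iff'.1 hx s _ htop
    refine ih fun i hi j hj hne => ?_
    by_contra hlt
    have hj' : j = k i - 1 - t := by have := ht i hi j hj hne; omega
    have := hcoeff i hi
    rw [if_pos (by omega), ← hj'] at this
    exact hne this

theorem eq_zero_of_sum_sum_pow_smul_eq_zero {x α : ι → M} {k : ι → ℕ}
    (hα : ∀ i, τ ^ (k i - 1) • α i = x i) (hkill : ∀ i, τ ^ k i • α i = 0)
    (hx : LinearIndependent K x) {s : Finset ι} {c : ι → ℕ → K}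
    (hsum : ∑ i ∈ s, ∑ j ∈ range (k i), c i j • τ ^ j • α i = 0) :
    ∀ i ∈ s, ∀ j < k i, c i j = 0 :=
  eq_zero_of_sum_sum_pow_smul_eq_zero_of_le hα hkill hx hsum (s.sup k)
    fun _ hi _ _ _ => (le_sup hi).trans (Nat.le_add_left _ _)

theorem iSupIndep_span_singleton_of_linearIndependent (hτ : Algebra.adjoin K {τ} = ⊤)
    {x α : ι → M} {k : ι → ℕ} (hα : ∀ i, τ ^ (k i - 1) • α i = x i)
    (hkill : ∀ i, τ ^ k i • α i = 0) (hx : LinearIndependent K x) :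
    iSupIndep fun i => R ∙ α i := by
  rw [iSupIndep_iff_finsetSum_eq_zero_imp_eq_zero]
  intro s v hv hsum
  choose! c hc using fun i hi =>
    exists_eq_sum_range_pow_smul_of_mem_span_singleton hτ (hkill i) (hv i hi)
  rw [sum_congr rfl hc] at hsum
  intro i hi
  rw [hc i hi]
  exact sum_eq_zero fun j hj => by
    rw [eq_zero_of_sum_sum_pow_smul_eq_zero hα hkill hx hsum i hi j (mem_range.1 hj), zero_smul]

theorem iSup_span_singleton_eq_top_of_pow_eq_zero {N : ℕ} (hN : τ ^ N = 0)
    {x α : ι → M} {k : ι → ℕ} (hα : ∀ i, τ ^ (k i - 1) • α i = x i)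
    (hspan : ∀ m < N, ∀ w : M, τ ^ (m + 1) • w = 0 →
      τ ^ m • w ∈ span K (x '' {i | m < k i})) :
    ⨆ i, R ∙ α i = ⊤ := by
  set S := ⨆ i, R ∙ α i
  suffices h : ∀ m ≤ N, ∀ w : M, τ ^ m • w = 0 → w ∈ S from
    eq_top_iff.2 fun w _ => h N le_rfl w (by rw [hN, zero_smul])
  intro m
  induction m with
  | zero => intro _ w hw; rw [pow_zero, one_smul] at hw; exact hw ▸ zero_mem S
  | succ m ih =>
    intro hm w hw
    have himage : span K (x '' {i | m < k i}) ≤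
        (S.map (LinearMap.lsmul R M (τ ^ m))).restrictScalars K := by
      refine span_le.2 ?_
      rintro _ ⟨i, hi, rfl⟩
      refine ⟨τ ^ (k i - 1 - m) • α i,
        smul_mem _ _ (mem_iSup_of_mem i (mem_span_singleton_self _)), ?_⟩
      rw [LinearMap.lsmul_apply, smul_smul, ← pow_add, ← hα,
        Nat.add_sub_of_le (Nat.le_sub_one_of_lt hi)]
    obtain ⟨u, hu, hτu⟩ := himage (hspan m (by omega) w hw)
    rw [LinearMap.lsmul_apply] at hτu
    have hdiff : w - u ∈ S := ih (by omega) _ (by rw [smul_sub, hτu, sub_self])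
    simpa using add_mem hdiff hu

end CyclicDecomposition

/-- Suppose for each `1 ≤ k ≤ p^n` we are given a family `x` indexed by `ι` with
`k i ∈ [1, p^n]`, `x i ∈ V_{k i}`, the `x i` linearly independent over `𝔽_p`, such that
for each `j` the elements `x i` with `k i ≥ j` span `V_j` over `𝔽_p` (i.e. the `x i` with
`k i = k` form a basis of a complement of `V_{k+1}` in `V_k`, and those with `k i = p^n` a
basis of `V_{p^n}`), and elements `α i` with `(σ-1)^{k i - 1} • α i = x i`.  Then `W` is
the internal direct sum of the cyclic `𝔽_p[G]`-submodules generated by the `α i`. -/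
theorem stmt_10 (p n : ℕ) (hp : p.Prime)
    (G : Type*) [CommGroup G] [Fintype G] (hG : Fintype.card G = p ^ n)
    (σ : G) (hσ : ∀ g : G, g ∈ Subgroup.zpowers σ)
    (W : Type*) [AddCommGroup W] [Module (MonoidAlgebra (ZMod p) G) W]
    [Module (ZMod p) W] [IsScalarTower (ZMod p) (MonoidAlgebra (ZMod p) G) W]
    (ι : Type*) (k : ι → ℕ) (x α : ι → W)
    (hk : ∀ i, 1 ≤ k i ∧ k i ≤ p ^ n)
    (hxV : ∀ i, x i ∈ Vset p σ W (k i))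
    (hindep : LinearIndependent (ZMod p) x)
    (hspan : ∀ j, 1 ≤ j → j ≤ p ^ n →
      Vset p σ W j ⊆ ↑(Submodule.span (ZMod p) (x '' {i | j ≤ k i})))
    (hα : ∀ i, (MonoidAlgebra.of (ZMod p) G σ - 1) ^ (k i - 1) • α i = x i) :
    iSupIndep (fun i => Submodule.span (MonoidAlgebra (ZMod p) G) {α i}) ∧
    (⨆ i, Submodule.span (MonoidAlgebra (ZMod p) G) {α i}) = ⊤ := by
  have : Fact p.Prime := ⟨hp⟩
  have hfix := MonoidAlgebra.forall_of_smul_eq_self_iff (k := ZMod p) hσ (W := W)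
  have hkill : ∀ i, (MonoidAlgebra.of (ZMod p) G σ - 1) ^ k i • α i = 0 := fun i => by
    rw [← Nat.sub_add_cancel (hk i).1, pow_succ', mul_smul, hα, (hfix _).1 (hxV i).2]
  refine ⟨iSupIndep_span_singleton_of_linearIndependent
      (MonoidAlgebra.adjoin_of_sub_one_eq_top (k := ZMod p) hσ) hα hkill hindep,
    iSup_span_singleton_eq_top_of_pow_eq_zero (K := ZMod p)
      (MonoidAlgebra.of_sub_one_pow_eq_zero_of_card_eq p n hG σ) hα ?_⟩
  intro m hm w hw
  refine hspan (m + 1) (by omega) hm ⟨⟨w, by simp⟩, (hfix _).2 ?_⟩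
  rwa [smul_smul, ← pow_succ']
end
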